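/- arXiv:math/9610226 — 2 statements merged into one kernel-verified Lean document; each statement's English description precedes it below -/
import Mathlib

section
/- Let λ be a singular strong limit cardinal, θ a cardinal with 2 ≤ θ < λ, δ* a limit ordinal and κ a cardinal such that cf(λ) = cf(δ*) ≤ δ* < cf(κ) ≤ κ < λ. Let ⟨μ_α : α < δ*⟩ be a strictly increasing sequence of strong limit cardinals with supremum λ such that θ < μ_0 and, for every α < δ*, cf(μ_α) < κ and 2^{μ_α} = μ_α⁺. Let χ be a cardinal with λ < χ < 2^λ and suppose there is an ideal J on δ* containing every bounded subset of δ* such that ∏_{α<δ*} μ_α⁺ / J is χ⁺-directed: for every family F of at most χ functions f with domain δ* and f(α) < μ_α⁺ for all α < δ*, there is such a function g with f ≤_J g for every f ∈ F. Then d_{<κ}(λ, θ) > χ. -/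
open Cardinal Set

noncomputable section

/-- `covNum μ λ κ σ` : the covering number cov(μ, λ, κ, σ). -/
noncomputable def covNum (mu lam kap sig : Cardinal.{0}) : Cardinal.{0} :=
  sInf { c : Cardinal |
    ∃ P : Set (Set mu.out), #P = c ∧ (∀ A ∈ P, #A < lam) ∧
      ∀ X : Set mu.out, #X < kap →
        ∃ Q : Set (Set mu.out), Q ⊆ P ∧ #Q < sig ∧ X ⊆ ⋃₀ Q }

/-- cf(∏ a / D) : the least cardinality of a ≤_D-cofinal subfamily of ∏ a. -/
noncomputable def cfProd (a : Set Cardinal.{0}) (D : Ultrafilter a) : Cardinal.{0} :=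
  sInf { c : Cardinal |
    ∃ F : Set (↥a → Ordinal),
      #F = Cardinal.lift.{1} c ∧
      (∀ f ∈ F, ∀ θ : a, f θ < (θ : Cardinal).ord) ∧
      (∀ f : ↥a → Ordinal, (∀ θ : a, f θ < (θ : Cardinal).ord) →
        ∃ g ∈ F, { θ : a | f θ ≤ g θ } ∈ D) }

/-- pcf(a) = { cf(∏ a / D) : D an ultrafilter on a }. -/
noncomputable def pcf (a : Set Cardinal.{0}) : Set Cardinal.{0} :=
  { c | ∃ D : Ultrafilter a, cfProd a D = c }

/-- A witness for `pp κ μ`: a set `a` of regular cardinals below `μ` of cardinality at most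
`κ` with supremum `μ`, together with an ultrafilter on `a` containing all co-bounded sets. -/
def IsPPWitness (kap mu : Cardinal.{0}) (a : Set Cardinal.{0}) (D : Ultrafilter a) : Prop :=
  (∀ θ ∈ a, θ.IsRegular ∧ θ < mu) ∧
  #(↥a) ≤ Cardinal.lift.{1} kap ∧
  sSup a = mu ∧
  ∀ s : Set a, (∃ γ, γ < mu ∧ ∀ θ : a, θ ∉ s → (θ : Cardinal) ≤ γ) → s ∈ D

/-- pp_κ(μ). -/
noncomputable def pp (kap mu : Cardinal.{0}) : Cardinal.{0} :=
  sSup { c | ∃ (a : Set Cardinal) (D : Ultrafilter a), IsPPWitness kap mu a D ∧ cfProd a D = c }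

/-- pp⁺_κ(μ) : the least cardinal strictly greater than all the relevant cofinalities. -/
noncomputable def ppPlus (kap mu : Cardinal.{0}) : Cardinal.{0} :=
  sInf { c | ∀ (a : Set Cardinal) (D : Ultrafilter a), IsPPWitness kap mu a D → cfProd a D < c }

/-- pp(μ) = pp_{cf μ}(μ). -/
noncomputable def ppStd (mu : Cardinal.{0}) : Cardinal := pp mu.ord.cof mu

/-- pp⁺(μ) = pp⁺_{cf μ}(μ). -/
noncomputable def ppPlusStd (mu : Cardinal.{0}) : Cardinal := ppPlus mu.ord.cof mu

/-- A tree: a strict partial order in which the predecessors of any point are well-ordered. -/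
structure STree : Type 1 where
  carrier : Type
  lt : carrier → carrier → Prop
  isStrict : IsStrictOrder carrier lt
  predWellOrder : ∀ x : carrier, IsWellOrder { y : carrier // lt y x } (fun a b => lt a.1 b.1)

/-- The level of a point of a tree: the order type of its set of predecessors. -/
noncomputable def STree.level (T : STree) (x : T.carrier) : Ordinal :=
  @Ordinal.type { y : T.carrier // T.lt y x } (fun a b => T.lt a.1 b.1) (T.predWellOrder x)

/-- A δ-branch of a tree: a chain meeting the α-th level for every α < δ. -/
def STree.IsBranch (T : STree) (δ : Ordinal) (B : Set T.carrier) : Prop :=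
  (∀ x ∈ B, ∀ y ∈ B, x = y ∨ T.lt x y ∨ T.lt y x) ∧
  ∀ α < δ, ∃ x ∈ B, T.level x = α

/-- The cardinality of a tree. -/
noncomputable def STree.card (T : STree) : Cardinal := #T.carrier

/-- The number of δ-branches of a tree. -/
noncomputable def STree.branchCard (T : STree) (δ : Ordinal) : Cardinal :=
  #{ B : Set T.carrier // T.IsBranch δ B }

/-- A (set-theoretic, proper) ideal on a set `X`. -/
structure SIdeal (X : Type*) where
  sets : Set (Set X)
  empty_mem : ∅ ∈ sets
  mem_of_subset : ∀ {A B : Set X}, A ∈ sets → B ⊆ A → B ∈ sets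
  union_mem : ∀ {A B : Set X}, A ∈ sets → B ∈ sets → A ∪ B ∈ sets
  univ_not_mem : Set.univ ∉ sets

/-- `dens κ λ θ` = d_{<κ}(λ, θ), the density of the `<κ`-box product of λ copies of θ. -/
noncomputable def dens (kap lam theta : Cardinal.{0}) : Cardinal :=
  sInf { c : Cardinal |
    ∃ F : Set (lam.out → theta.out), #F = c ∧
      ∀ (A : Set lam.out) (g : ↥A → theta.out), #(↥A) < kap →
        ∃ f ∈ F, ∀ x : A, f x.1 = g x }

/-!
Since `2 ^ μ = μ⁺`, the functions from a set of size `μ` to `θ` can be coded injectively by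
ordinals below `μ⁺`. For `γ < μ⁺`, the at most `μ` functions with code `≤ γ` are the union of
`cf μ` families of size `< μ`; as `μ` is a strong limit, each family fails to separate some two
points, and prescribing different values there excludes the family. So a pattern of size `cf μ`
forces the code above `γ`.

Split `λ` into pieces of size `μ_α` and let `F` be a `<κ`-dense family of size `≤ χ`. Bound the
codes of the restrictions of members of `F` modulo `J` by `g`. Gluing, over `α < δ*`, patterns
forcing the `α`-th code above `g α` gives a pattern of size `< κ` (as `δ* < cf κ`), which some
`f ∈ F` extends; then `g < code f` everywhere, so `δ* ∈ J`.
-/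

universe u

namespace Cardinal

theorem exists_iUnion_eq_univ_of_mk_le {α S : Type u} {μ : Cardinal.{u}} (hμ : ℵ₀ ≤ μ)
    (hα : #α ≤ μ) (hS : #S = μ.ord.cof) :
    ∃ H : S → Set α, (∀ j, #(H j) < μ) ∧ ⋃ j, H j = Set.univ := by
  have hM : #μ.ord.ToType = μ := by rw [mk_toType, card_ord]
  obtain ⟨ι⟩ := (le_def α μ.ord.ToType).1 (hα.trans_eq hM.symm)
  obtain ⟨s, hs, hsc⟩ := Order.exists_cof_eq μ.ord.ToType
  rw [Ordinal.cof_toType, ← hS] at hsc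
  obtain ⟨e⟩ := Cardinal.eq.1 hsc
  refine ⟨fun j => ι ⁻¹' Iic (e.symm j), fun j => ?_, eq_univ_of_forall fun a => ?_⟩
  · refine (mk_preimage_of_injective _ _ ι.injective).trans_lt ((mk_Iic_lt _ ?_ ?_).trans_eq hM)
    · rw [hM, Ordinal.type_toType]
    · exact hμ.trans_eq hM.symm
  · obtain ⟨b, hb, hab⟩ := hs (ι a)
    exact mem_iUnion.2 ⟨e ⟨b, hb⟩, by simpa using hab⟩

theorem aleph0_le_cof_ord {μ : Cardinal} (hμ : ℵ₀ ≤ μ) : ℵ₀ ≤ μ.ord.cof :=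
  Ordinal.aleph0_le_cof_iff.2 (Ordinal.one_lt_cof_iff.2 (isSuccLimit_ord hμ))

theorem sum_lt_of_mk_lt_cof {ι : Type u} {f : ι → Cardinal.{u}} {κ : Cardinal.{u}} (hκ : ℵ₀ ≤ κ)
    (hι : #ι < κ.ord.cof) (hf : ∀ i, f i < κ) : sum f < κ :=
  (sum_le_mk_mul_iSup f).trans_lt <|
    mul_lt_of_lt hκ (hι.trans_le (Ordinal.cof_ord_le κ)) (iSup_lt_of_lt_cof_ord hι hf)

theorem exists_eqOn_forall_notMem {M S Θ : Type u} [Nontrivial Θ] {μ : Cardinal.{u}}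
    (hμ : IsStrongLimit μ) (hM : #M = μ) (hS : #S = μ.ord.cof) (H : Set (M × S → Θ))
    (hH : #H ≤ μ) :
    ∃ A : Set (M × S), #A ≤ μ.ord.cof ∧ ∃ ψ : M × S → Θ, ∀ w, EqOn w ψ A → w ∉ H := by
  classical
  obtain ⟨v₀, v₁, hv⟩ := exists_pair_ne Θ
  obtain ⟨Hs, hHs, hcov⟩ := exists_iUnion_eq_univ_of_mk_le hμ.aleph0_le hH hS
  -- There are `2 ^ #(Hs j) < μ` traces, so two points of `M` look alike to all of `Hs j`.
  have hsep : ∀ j, ∃ x y : M, x ≠ y ∧ ∀ h ∈ Hs j, (h.1 (x, j) = v₀ ↔ h.1 (y, j) = v₀) := by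
    intro j
    let trace : M → Hs j → Prop := fun m h => h.1.1 (m, j) = v₀
    have hlt : #(Hs j → Prop) < #M := by
      simpa only [mk_arrow, mk_Prop, lift_ofNat, lift_uzero, hM] using
        hμ.isStrongPrelimit (hHs j)
    obtain ⟨x, y, hxy, hne⟩ := Function.not_injective_iff.1 fun hinj : trace.Injective =>
      (mk_le_of_injective hinj).not_gt hlt
    exact ⟨x, y, hne, fun h hh => iff_of_eq (congrFun hxy ⟨h, hh⟩)⟩
  choose x y hxy hsep using hsep
  refine ⟨range (fun j => (x j, j)) ∪ range (fun j => (y j, j)), ?_,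
    fun d => if d.1 = x d.2 then v₀ else v₁, fun w hw hwH => ?_⟩
  · calc #(range (fun j => (x j, j)) ∪ range (fun j => (y j, j)) : Set (M × S))
        ≤ #S + #S := (mk_union_le _ _).trans (add_le_add mk_range_le mk_range_le)
      _ = μ.ord.cof := by rw [hS, add_eq_self (aleph0_le_cof_ord hμ.aleph0_le)]
  · obtain ⟨j, hj⟩ := mem_iUnion.1 (hcov ▸ mem_univ (⟨w, hwH⟩ : H))
    have h₀ : w (x j, j) = v₀ := by simpa using hw (Or.inl ⟨j, rfl⟩)
    have h₁ : w (y j, j) = v₁ := by simpa [(hxy j).symm] using hw (Or.inr ⟨j, rfl⟩)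
    exact hv (((hsep j ⟨w, hwH⟩ hj).1 h₀).symm.trans h₁)

theorem exists_code_of_two_power_eq_succ {Θ : Type u} [Nontrivial Θ] {μ : Cardinal.{u}}
    (hμ : IsStrongLimit μ) (hΘ : #Θ ≤ μ) (h2μ : 2 ^ μ = Order.succ μ) :
    ∃ (D : Type u) (code : (D → Θ) → Ordinal.{u}), #D = μ ∧
      (∀ w, code w < (Order.succ μ).ord) ∧
      ∀ γ < (Order.succ μ).ord, ∃ A : Set D, #A ≤ μ.ord.cof ∧
        ∃ ψ : D → Θ, ∀ w, EqOn w ψ A → γ < code w := by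
  have hμ₀ := hμ.aleph0_le
  have hD : #(μ.out × μ.ord.cof.out) = μ := by
    rw [mk_prod, lift_id, lift_id, mk_out, mk_out,
      mul_eq_left hμ₀ (Ordinal.cof_ord_le μ) (aleph0_pos.trans_le (aleph0_le_cof_ord hμ₀)).ne']
  have hfun : lift.{u + 1} #(μ.out × μ.ord.cof.out → Θ) ≤
      lift.{u} #(Iio (Order.succ μ).ord) := by
    rw [lift_id'.{u, u + 1}, Cardinal.mk_Iio_ordinal, card_ord, lift_le, ← power_def, hD, ← h2μ,
      ← power_self_eq hμ₀]
    exact power_le_power_right hΘ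
  obtain ⟨c⟩ := lift_mk_le'.1 hfun
  refine ⟨_, fun w => c w, hD, fun w => (c w).2, fun γ hγ => ?_⟩
  have hH : #(((↑) ∘ c) ⁻¹' Iic γ : Set (μ.out × μ.ord.cof.out → Θ)) ≤ μ := by
    have hsucc : Order.succ γ < (Order.succ μ).ord :=
      (isSuccLimit_ord (hμ₀.trans (Order.le_succ μ))).succ_lt hγ
    have := mk_preimage_of_injective_lift _ (Iio (Order.succ γ))
      (Subtype.val_injective.comp c.injective)
    rw [mk_Iio_ordinal, lift_lift, lift_le] at this
    rw [← Order.Iio_succ]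
    exact this.trans (Order.lt_succ_iff.1 (lt_ord.1 hsucc))
  obtain ⟨A, hA, ψ, hψ⟩ := exists_eqOn_forall_notMem hμ (mk_out μ) (mk_out _) _ hH
  exact ⟨A, hA, ψ, fun w hw => not_le.1 (hψ w hw)⟩

end Cardinal

theorem lt_dens_of_forall_lt_mk {kap lam theta chi : Cardinal.{0}} (hθ : theta ≠ 0)
    (h : ∀ F : Set (lam.out → theta.out), (∀ (A : Set lam.out) (g : A → theta.out), #A < kap →
      ∃ f ∈ F, ∀ x : A, f x = g x) → chi < #F) :
    chi < dens kap lam theta := by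
  have : Nonempty theta.out := mk_ne_zero_iff.1 (by rwa [mk_out])
  refine lt_of_lt_of_le (Order.lt_succ chi) (le_csInf ⟨_, Set.univ, rfl, fun A g _ => ?_⟩ ?_)
  · classical
    exact ⟨fun x => if hx : x ∈ A then g ⟨x, hx⟩ else Classical.arbitrary _, mem_univ _,
      fun x => by simp [x.2]⟩
  · rintro _ ⟨F, rfl, hF⟩
    exact Order.succ_le_of_lt (h F hF)

theorem stmt10_general (lam theta kap : Cardinal) (δs : Ordinal)
    (hth1 : 2 ≤ theta)
    (hlim : Order.IsSuccLimit δs)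
    (hcf3 : δs < kap.ord.cof.ord) (hkap : kap < lam)
    (mu : δs.ToType → Cardinal)
    (hmusl : ∀ i, ∀ σ : Cardinal, σ < mu i → (2 : Cardinal) ^ σ < mu i)
    (hsup : (⨆ i, mu i) = lam)
    (hth0 : ∀ i, theta < mu i)
    (hcfmu : ∀ i, (mu i).ord.cof < kap)
    (h2mu : ∀ i, (2 : Cardinal) ^ mu i = Order.succ (mu i))
    (chi : Cardinal)
    (J : SIdeal δs.ToType)
    (hdir : ∀ F : Set (δs.ToType → Ordinal),
      #F ≤ Cardinal.lift.{1} chi →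
      (∀ f ∈ F, ∀ i, f i < (Order.succ (mu i)).ord) →
      ∃ g : δs.ToType → Ordinal, (∀ i, g i < (Order.succ (mu i)).ord) ∧
        ∀ f ∈ F, { i | g i < f i } ∈ J.sets) :
    chi < dens kap lam theta := by
  have hι : #δs.ToType < kap.ord.cof := by rw [mk_toType]; exact lt_ord.1 hcf3
  have hι₀ : ℵ₀ ≤ #δs.ToType := by
    simpa using Ordinal.card_le_card (Ordinal.omega0_le_of_isSuccLimit hlim)
  have hθ : 1 < #theta.out := (mk_out theta).symm ▸ Cardinal.one_lt_two.trans_le hth1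
  have := one_lt_iff_nontrivial.1 hθ
  choose D code hD hcode hpat using fun i => exists_code_of_two_power_eq_succ (Θ := theta.out)
    ⟨(hth0 i).ne_bot, hmusl i⟩ ((mk_out theta).trans_le (hth0 i).le) (h2mu i)
  obtain ⟨E⟩ : Nonempty (lam.out ≃ Σ i, D i) := by
    refine Cardinal.eq.1 ?_
    rw [mk_out, mk_sigma, funext hD, sum_eq_iSup_of_mk_le_iSup hι₀, hsup]
    exact hsup ▸ (hι.trans_le (Ordinal.cof_ord_le kap)).le.trans hkap.le
  refine lt_dens_of_forall_lt_mk (zero_lt_two.trans_le hth1).ne' fun F hF => not_le.1 fun hFχ => ?_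
  let cod (f : lam.out → theta.out) (i : δs.ToType) : Ordinal := code i fun d => f (E.symm ⟨i, d⟩)
  obtain ⟨g, hg, hgF⟩ := hdir (cod '' F) (by simpa using mk_image_le_lift.trans (lift_le.2 hFχ))
    (by rintro _ ⟨f, -, rfl⟩ i; exact hcode i _)
  choose A hA ψ hψ using fun i => hpat i (g i) (hg i)
  have hκ₀ : ℵ₀ ≤ kap := hι₀.trans (hι.trans_le (Ordinal.cof_ord_le kap)).le
  have hAκ : #(Σ i, A i) < kap :=
    mk_sigma _ ▸ sum_lt_of_mk_lt_cof hκ₀ hι fun i => (hA i).trans_lt (hcfmu i)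
  obtain ⟨f, hfF, hf⟩ := hF (range fun p : Σ i, A i => E.symm ⟨p.1, p.2⟩)
    (fun x => ψ (E x).1 (E x).2) (mk_range_le.trans_lt hAκ)
  have hgf : ∀ i, g i < cod f i := fun i => hψ i _ fun d hd => by
    have := hf ⟨_, ⟨i, d, hd⟩, rfl⟩
    rwa [Equiv.apply_symm_apply] at this
  exact J.univ_not_mem (eq_univ_of_forall hgf ▸ hgF _ (mem_image_of_mem _ hfF))

/-- Shelah 5.4(a): for `λ` singular strong limit and `⟨μ_α : α < δ*⟩` strong limits with
`2^{μ_α} = μ_α⁺`, if `∏ μ_α⁺ / J` is `χ⁺`-directed for some ideal `J` on `δ*` containing the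
bounded sets, then `d_{<κ}(λ, θ) > χ`. -/
theorem stmt10 (lam theta kap : Cardinal) (δs : Ordinal)
    (hstrong : ∀ σ : Cardinal, σ < lam → (2 : Cardinal) ^ σ < lam)
    (hsing : lam.ord.cof < lam)
    (hth1 : 2 ≤ theta) (hth2 : theta < lam)
    (hlim : Order.IsSuccLimit δs)
    (hcf1 : lam.ord.cof = δs.cof) (hcf2 : δs.cof.ord ≤ δs)
    (hcf3 : δs < kap.ord.cof.ord) (hkap : kap < lam)
    (mu : δs.ToType → Cardinal)
    (hmono : ∀ i j : δs.ToType, i < j → mu i < mu j)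
    (hmusl : ∀ i, ∀ σ : Cardinal, σ < mu i → (2 : Cardinal) ^ σ < mu i)
    (hsup : (⨆ i, mu i) = lam)
    (hth0 : ∀ i, theta < mu i)
    (hcfmu : ∀ i, (mu i).ord.cof < kap)
    (h2mu : ∀ i, (2 : Cardinal) ^ mu i = Order.succ (mu i))
    (chi : Cardinal) (hchi1 : lam < chi) (hchi2 : chi < 2 ^ lam)
    (J : SIdeal δs.ToType)
    (hJbd : ∀ B : Set δs.ToType, BddAbove B → B ∈ J.sets)
    (hdir : ∀ F : Set (δs.ToType → Ordinal),
      #F ≤ Cardinal.lift.{1} chi →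
      (∀ f ∈ F, ∀ i, f i < (Order.succ (mu i)).ord) →
      ∃ g : δs.ToType → Ordinal, (∀ i, g i < (Order.succ (mu i)).ord) ∧
        ∀ f ∈ F, { i | g i < f i } ∈ J.sets) :
    chi < dens kap lam theta :=
  stmt10_general lam theta kap δs hth1 hlim hcf3 hkap mu hmusl hsup hth0 hcfmu h2mu chi J hdir

end
end

section
/- Let δ be an infinite ordinal, J an ideal on δ, and for each α < δ let P_α be a nonempty partial order of cardinality at most χ_α which is λ_α-directed (every subset of P_α of cardinality less than λ_α has an upper bound in P_α), where λ_α is a regular cardinal with |δ|⁺ < λ_α ≤ χ_α. For A ⊆ δ let J+A denote the ideal of all B ⊆ δ with B ∖ A ∈ J, and for f, g ∈ ∏_{α<δ} P_α write f ≤_{J+A} g iff {α < δ : f(α) ≤_{P_α} g(α) fails} ∈ J+A. Suppose θ* is the least cardinal θ for which there exist A ⊆ δ with δ ∖ A ∉ J and a ≤_{J+A}-increasing sequence ⟨f_i : i < θ⟩ in ∏_{α<δ} P_α such that no g ∈ ∏_{α<δ} P_α satisfies: for every i < θ, {α < δ : f_i(α) ≤_{P_α} g(α)} ∉ J+A. Then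 every subset of ∏_{α<δ} P_α of cardinality less than θ* has a ≤_J-upper bound, where ≤_J means ≤_{J+∅}. -/
open Cardinal Set

noncomputable section

/-!
Let `κ = |δ|⁺`. Families of at most `κ` functions are bounded pointwise, as every `λ_α > κ`. For a
family `F` with `κ < c = |F| < θ*`, argue by induction on `c`: enumerate `F` and build by recursion
a `≤_J`-increasing `⟨g_a : a < c⟩` with `f_a ≤_J g_a`. If `cf c < c`, a cofinal subsequence is
bounded by induction. If `c` is regular and `g` is unbounded, build along `κ` functions `p_ζ`
pointwise above all earlier `q_ξ`, indices `a_ζ` with `g_{a_ζ} ≰_J p_ζ`, and (as `c < θ*`)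
pseudo-bounds `q_ζ` of `g` modulo `J + {g_{a_ζ} ≤ p_ζ}`. Take `a⋆` above all `a_ζ` (as `κ < c`) and
`ζ` such that each coordinate at which `g_{a⋆}` lies below some `q_ξ` does so for some `ξ < ζ`
(as `|δ| < κ`). On the `J`-positive set where `g_{a⋆} ≤ q_ζ` but not `g_{a_ζ} ≤ p_ζ`, we then have
`g_{a_ζ} ≤ g_{a⋆} ≤ q_ξ ≤ p_ζ` outside a set in `J`, a contradiction.
-/

universe u

theorem exists_forall_rel_restrict_Iio {α X : Type*} [Preorder α] [WellFoundedLT α]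
    (R : ∀ a : α, (Iio a → X) → X → Prop) (h : ∀ a u, ∃ x, R a u x) :
    ∃ g : α → X, ∀ a, R a (fun b => g b) (g a) := by
  choose F hF using h
  let g : α → X := wellFounded_lt.fix fun a prev => F a fun b => prev b b.2
  have hg : ∀ a, g a = F a fun b => g b := wellFounded_lt.fix_eq _
  exact ⟨g, fun a => hg a ▸ hF a _⟩

section Cofinality

variable {Z β : Type u} [LinearOrder Z]

theorem exists_forall_lt_of_mk_lt_cof (w : β → Z) (h : #β < Order.cof Z) :
    ∃ z, ∀ b, w b < z := by
  have hw : ¬ IsCofinal (range w) := fun hw => (Order.cof_le hw).not_gt (mk_range_le.trans_lt h)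
  obtain ⟨z, hz⟩ := not_isCofinal_iff.1 hw
  exact ⟨z, fun b => hz _ (mem_range_self b)⟩

theorem exists_forall_exists_lt_of_mk_lt_cof (p : β → Z → Prop) (h : #β < Order.cof Z) :
    ∃ z₀, ∀ b z, p b z → ∃ z' < z₀, p b z' := by
  choose w hw using fun b : {b // ∃ z, p b z} => b.2
  obtain ⟨z₀, hz₀⟩ := exists_forall_lt_of_mk_lt_cof w ((mk_subtype_le _).trans_lt h)
  exact ⟨z₀, fun b z hz => ⟨w ⟨b, z, hz⟩, hz₀ _, hw ⟨b, z, hz⟩⟩⟩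

end Cofinality

theorem Pi.bddAbove_of_mk_lt {ι : Type u} {P : ι → Type u} [∀ i, Preorder (P i)]
    {lam : ι → Cardinal.{u}} (hdir : ∀ i, ∀ s : Set (P i), #s < lam i → BddAbove s)
    {S : Set (∀ i, P i)} (hS : ∀ i, #S < lam i) : BddAbove S :=
  bddAbove_pi.2 fun i => hdir i _ (mk_image_le.trans_lt (hS i))

namespace SIdeal

variable {ι : Type} (J : SIdeal ι) {P : ι → Type} [∀ i, Preorder (P i)]

def PiLE (f g : ∀ i, P i) : Prop := {i | ¬ f i ≤ g i} ∈ J.sets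

notation:50 f " ≤[" J "] " g:50 => SIdeal.PiLE J f g

variable {J} {f g k : ∀ i, P i}

theorem PiLE.of_le (h : f ≤ g) : f ≤[J] g :=
  J.mem_of_subset J.empty_mem fun i hi => hi (h i)

theorem PiLE.refl (f : ∀ i, P i) : f ≤[J] f := .of_le le_rfl

theorem PiLE.trans (h₁ : f ≤[J] g) (h₂ : g ≤[J] k) : f ≤[J] k :=
  J.mem_of_subset (J.union_mem h₁ h₂) fun _ hfk =>
    or_iff_not_imp_left.2 fun hfg hgk => hfk ((not_not.1 hfg).trans hgk)

variable (J P) in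
/-- `B \ A ∈ J` encodes `B ∈ J + A`; `θ*` is the least `c` for which this fails. -/
def HasPseudoBounds (c : Cardinal) : Prop :=
  ∀ A : Set ι, Set.univ \ A ∉ J.sets → ∀ g : c.ord.ToType → ∀ i, P i,
    (∀ a b, a ≤ b → {i | ¬ g a i ≤ g b i} \ A ∈ J.sets) →
      ∃ q : ∀ i, P i, ∀ a, {i | g a i ≤ q i} \ A ∉ J.sets

variable {α : Type} [LinearOrder α] {c : Cardinal}

theorem exists_monotone_piLE_of_forall_mk_lt [WellFoundedLT α] (hc : ℵ₀ ≤ c)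
    (hα : ∀ a : α, #(Iio a) < c) (hbd : ∀ S : Set (∀ i, P i), #S < c → ∃ b, ∀ f ∈ S, f ≤[J] b)
    (f : α → ∀ i, P i) :
    ∃ g : α → ∀ i, P i, (∀ ⦃a b⦄, a ≤ b → g a ≤[J] g b) ∧ ∀ a, f a ≤[J] g a := by
  obtain ⟨g, hg⟩ := exists_forall_rel_restrict_Iio
    (fun a u x => ∀ v ∈ insert (f a) (range u), v ≤[J] x) fun a u =>
      hbd _ (mk_insert_le.trans_lt
        (add_lt_of_lt hc (mk_range_le.trans_lt (hα a)) (one_lt_aleph0.trans_le hc)))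
  refine ⟨g, fun a b hab => ?_, fun a => hg a _ (mem_insert _ _)⟩
  obtain rfl | hlt := hab.eq_or_lt
  · exact .refl _
  · exact hg b _ (mem_insert_of_mem _ ⟨⟨a, hlt⟩, rfl⟩)

theorem exists_piLE_bound_of_cof_lt (hcof : Order.cof α < c)
    (hbd : ∀ S : Set (∀ i, P i), #S < c → ∃ b, ∀ f ∈ S, f ≤[J] b) {g : α → ∀ i, P i}
    (hg : ∀ ⦃a b⦄, a ≤ b → g a ≤[J] g b) : ∃ b, ∀ a, g a ≤[J] b := by
  obtain ⟨S, hS, hSc⟩ := Order.exists_cof_eq α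
  obtain ⟨b, hb⟩ := hbd (g '' S) (mk_image_le.trans_lt (hSc ▸ hcof))
  refine ⟨b, fun a => ?_⟩
  obtain ⟨a', ha', haa'⟩ := hS a
  exact (hg haa').trans (hb _ (mem_image_of_mem g ha'))

theorem exists_piLE_bound_of_forall_exists_pseudoBound {Z : Type} [LinearOrder Z]
    [WellFoundedLT Z] (hιZ : #ι < Order.cof Z) (hZα : #Z < Order.cof α)
    (hptub : ∀ S : Set (∀ i, P i), #S ≤ #Z → BddAbove S) {g : α → ∀ i, P i}
    (hg : ∀ ⦃a b⦄, a ≤ b → g a ≤[J] g b)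
    (hpseudo : ∀ A : Set ι, Set.univ \ A ∉ J.sets →
      ∃ q : ∀ i, P i, ∀ a, {i | g a i ≤ q i} \ A ∉ J.sets) :
    ∃ b, ∀ a, g a ≤[J] b := by
  by_contra hnb
  push Not at hnb
  obtain ⟨s, hs⟩ := exists_forall_rel_restrict_Iio (α := Z) (X := (∀ i, P i) × α × (∀ i, P i))
    (fun _ u x => (∀ y, (u y).2.2 ≤ x.1) ∧
      ∀ a, {i | g a i ≤ x.2.2 i} \ {i | g x.2.1 i ≤ x.1 i} ∉ J.sets) fun _ u => by
    obtain ⟨p, hp⟩ := hptub (range fun y => (u y).2.2) (mk_range_le.trans (mk_set_le _))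
    obtain ⟨a₀, ha₀⟩ := hnb p
    obtain ⟨q, hq⟩ := hpseudo {i | g a₀ i ≤ p i} (by rwa [← compl_eq_univ_sdiff, compl_ofPred])
    exact ⟨(p, a₀, q), fun y => hp (mem_range_self y), hq⟩
  obtain ⟨a', ha'⟩ := exists_forall_lt_of_mk_lt_cof (fun z => (s z).2.1) hZα
  obtain ⟨z, hz⟩ := exists_forall_exists_lt_of_mk_lt_cof (fun i z => g a' i ≤ (s z).2.2 i) hιZ
  refine (hs z).2 a' (J.mem_of_subset (hg (ha' z).le) ?_)
  rintro i ⟨hi, hi'⟩ hle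
  obtain ⟨z', hz', hi''⟩ := hz i z hi
  exact hi' (hle.trans (hi''.trans ((hs z).1 ⟨z', hz'⟩ i)))

theorem exists_piLE_bound_of_mk_eq {κ : Cardinal} (hκ : κ.IsRegular) (hικ : #ι < κ)
    (hptub : ∀ S : Set (∀ i, P i), #S ≤ κ → BddAbove S) (hc : J.HasPseudoBounds P c)
    (hbd : ∀ S : Set (∀ i, P i), #S < c → ∃ b, ∀ f ∈ S, f ≤[J] b) {F : Set (∀ i, P i)}
    (hF : #F = c) : ∃ b, ∀ f ∈ F, f ≤[J] b := by
  rcases le_or_gt c κ with hcκ | hκc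
  · obtain ⟨b, hb⟩ := hptub F (hF.trans_le hcκ)
    exact ⟨b, fun f hf => .of_le (hb hf)⟩
  obtain ⟨e⟩ := Cardinal.eq.1 (hF.trans (mk_ord_toType c).symm)
  obtain ⟨g, hg, hfg⟩ := exists_monotone_piLE_of_forall_mk_lt (hκ.aleph0_le.trans hκc.le)
    (fun a => (mk_Iio_lt a (by rw [mk_ord_toType, Ordinal.type_toType])).trans_eq (mk_ord_toType c))
    hbd (fun a => (e.symm a : ∀ i, P i))
  suffices ∃ b, ∀ a, g a ≤[J] b by
    obtain ⟨b, hb⟩ := this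
    exact ⟨b, fun f hf => by simpa using (hfg (e ⟨f, hf⟩)).trans (hb _)⟩
  rcases lt_or_ge c.ord.cof c with hcof | hcof
  · exact exists_piLE_bound_of_cof_lt (by rwa [Ordinal.cof_toType]) hbd hg
  · refine exists_piLE_bound_of_forall_exists_pseudoBound (Z := κ.ord.ToType) ?_ ?_ ?_ hg
      fun A hA => hc A hA g fun a b hab => J.mem_of_subset (hg hab) sdiff_subset
    · rwa [Ordinal.cof_toType, hκ.cof_ord]
    · rw [mk_ord_toType, Ordinal.cof_toType]
      exact hκc.trans_le hcof
    · rwa [mk_ord_toType]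

theorem exists_piLE_bound_of_mk_lt {κ θ : Cardinal} (hκ : κ.IsRegular) (hικ : #ι < κ)
    (hptub : ∀ S : Set (∀ i, P i), #S ≤ κ → BddAbove S) (hθ : ∀ c < θ, J.HasPseudoBounds P c)
    {F : Set (∀ i, P i)} (hF : #F < θ) : ∃ b, ∀ f ∈ F, f ≤[J] b := by
  suffices ∀ c < θ, ∀ F : Set (∀ i, P i), #F = c → ∃ b, ∀ f ∈ F, f ≤[J] b from this _ hF F rfl
  intro c
  induction c using WellFoundedLT.induction with
  | _ c IH =>
    intro hcθ F hF
    exact exists_piLE_bound_of_mk_eq hκ hικ hptub (hθ c hcθ)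
      (fun S hS => IH _ hS (hS.trans hcθ) S rfl) hF

end SIdeal

theorem stmt11_general (δ : Ordinal) (hδ : ℵ₀ ≤ δ.card)
    (J : SIdeal δ.ToType)
    (P : δ.ToType → Type) [inst : ∀ x, PartialOrder (P x)]
    (lamf : δ.ToType → Cardinal)
    (hlow : ∀ x, Order.succ δ.card < lamf x)
    (hdir : ∀ x, ∀ s : Set (P x), #(↥s) < lamf x → ∃ b : P x, ∀ y ∈ s, y ≤ b)
    (θstar : Cardinal)
    (hθ : IsLeast { θ : Cardinal | ∃ A : Set δ.ToType, (Set.univ \ A) ∉ J.sets ∧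
        ∃ f : θ.ord.ToType → (∀ x, P x),
          (∀ i j : θ.ord.ToType, i ≤ j →
            ({ x | ¬ f i x ≤ f j x } \ A) ∈ J.sets) ∧
          ¬ ∃ g : ∀ x, P x, ∀ i, ({ x | f i x ≤ g x } \ A) ∉ J.sets } θstar) :
    ∀ F : Set (∀ x, P x), #(↥F) < θstar →
      ∃ g : ∀ x, P x, ∀ f ∈ F, { x | ¬ f x ≤ g x } ∈ J.sets := by
  intro F hF
  refine SIdeal.exists_piLE_bound_of_mk_lt (isRegular_succ hδ) ?_
    (fun S hS => Pi.bddAbove_of_mk_lt hdir fun x => hS.trans_lt (hlow x)) ?_ hF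
  · rw [Cardinal.mk_toType]
    exact Order.lt_succ _
  · exact fun c hc A hA g hg => by_contra fun h => (hθ.2 ⟨A, hA, g, hg, h⟩).not_gt hc

/-- Shelah 5.4A: if `θ*` is the least length of a `≤_{J+A}`-increasing sequence in
`∏ P_α` with no pseudo-upper-bound, then `∏ P_α / J` is `θ*`-directed. -/
theorem stmt11 (δ : Ordinal) (hδ : ℵ₀ ≤ δ.card)
    (J : SIdeal δ.ToType)
    (P : δ.ToType → Type) [inst : ∀ x, PartialOrder (P x)]
    (lamf chif : δ.ToType → Cardinal)
    (hne : ∀ x, Nonempty (P x))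
    (hcard : ∀ x, #(P x) ≤ chif x)
    (hreg : ∀ x, (lamf x).IsRegular)
    (hlow : ∀ x, Order.succ δ.card < lamf x)
    (hup : ∀ x, lamf x ≤ chif x)
    (hdir : ∀ x, ∀ s : Set (P x), #(↥s) < lamf x → ∃ b : P x, ∀ y ∈ s, y ≤ b)
    (θstar : Cardinal)
    (hθ : IsLeast { θ : Cardinal | ∃ A : Set δ.ToType, (Set.univ \ A) ∉ J.sets ∧
        ∃ f : θ.ord.ToType → (∀ x, P x),
          (∀ i j : θ.ord.ToType, i ≤ j →
            ({ x | ¬ f i x ≤ f j x } \ A) ∈ J.sets) ∧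
          ¬ ∃ g : ∀ x, P x, ∀ i, ({ x | f i x ≤ g x } \ A) ∉ J.sets } θstar) :
    ∀ F : Set (∀ x, P x), #(↥F) < θstar →
      ∃ g : ∀ x, P x, ∀ f ∈ F, { x | ¬ f x ≤ g x } ∈ J.sets :=
  stmt11_general δ hδ J P (inst := inst) lamf hlow hdir θstar hθ

end
end
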